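/- Let f ∈ Homeo⁺(S¹) be n-savage, with intervals I_1^-, I_1^+, …, I_n^-, I_n^+ in cyclic order, pairwise disjoint closures, and f(S¹ ∖ ⋃_j \overline{I_j^-}) = ⋃_j I_j^+. Then for any nonzero integer k, f^k is also n-savage; moreover rot(f^n) = 0 and f has at least one periodic point in each interval I_j^+ and each I_j^-. -/

import Mathlib

open Set Function Filter MeasureTheory

/-- An orientation-preserving homeomorphism of `ℝ` commuting with `x ↦ x + 1`,
i.e. a lift of an orientation-preserving circle homeomorphism. -/
structure HomeoZR : Type where
  toFun : ℝ → ℝ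
  invFun : ℝ → ℝ
  left_inv : Function.LeftInverse invFun toFun
  right_inv : Function.RightInverse invFun toFun
  strictMono : StrictMono toFun
  map_add_one : ∀ x, toFun (x + 1) = toFun x + 1

namespace HomeoZR

/-- The identity. -/
protected def id : HomeoZR :=
  ⟨_root_.id, _root_.id, fun _ => rfl, fun _ => rfl, strictMono_id, fun _ => rfl⟩

/-- Composition `f ∘ g`. -/
protected def comp (f g : HomeoZR) : HomeoZR where
  toFun := f.toFun ∘ g.toFun
  invFun := g.invFun ∘ f.invFun
  left_inv := fun x => by
    show g.invFun (f.invFun (f.toFun (g.toFun x))) = x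
    rw [f.left_inv, g.left_inv]
  right_inv := fun x => by
    show f.toFun (g.toFun (g.invFun (f.invFun x))) = x
    rw [g.right_inv, f.right_inv]
  strictMono := f.strictMono.comp g.strictMono
  map_add_one := fun x => by
    show f.toFun (g.toFun (x + 1)) = f.toFun (g.toFun x) + 1
    rw [g.map_add_one, f.map_add_one]

/-- Inverse. -/
protected def symm (f : HomeoZR) : HomeoZR where
  toFun := f.invFun
  invFun := f.toFun
  left_inv := f.right_inv
  right_inv := f.left_inv
  strictMono := by
    intro x y hxy
    rcases lt_trichotomy (f.invFun x) (f.invFun y) with h | h | h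
    · exact h
    · exact absurd (by rw [← f.right_inv x, ← f.right_inv y, h]) (ne_of_lt hxy)
    · have h2 := f.strictMono h
      rw [f.right_inv, f.right_inv] at h2
      exact absurd h2 (lt_asymm hxy)
  map_add_one := fun x => by
    have h1 : f.invFun (f.toFun (f.invFun x + 1)) = f.invFun (x + 1) := by
      rw [f.map_add_one, f.right_inv]
    rw [f.left_inv] at h1
    exact h1.symm

/-- The associated monotone degree-one lift. -/
def toLift (f : HomeoZR) : CircleDeg1Lift :=
  ⟨⟨f.toFun, f.strictMono.monotone⟩, f.map_add_one⟩

/-- The translation number `rot̃(f)`. -/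
noncomputable def transNum (f : HomeoZR) : ℝ :=
  f.toLift.translationNumber

/-- The canonical lift of the underlying circle homeomorphism: the lift whose
translation number lies in `[0,1)`, as a plain function. -/
noncomputable def canon (f : HomeoZR) : ℝ → ℝ :=
  fun x => f.toFun x - (⌊f.transNum⌋ : ℝ)

/-- The periodic points of the underlying circle homeomorphism, as a
`ℤ`-periodic subset of `ℝ`. -/
def Per (f : HomeoZR) : Set ℝ :=
  {x | ∃ n : ℕ, 0 < n ∧ ∃ m : ℤ, f.toFun^[n] x = x + m}

/-- The fixed points of the underlying circle homeomorphism, as a subset of `ℝ`. -/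
def FixS (f : HomeoZR) : Set ℝ :=
  {x | ∃ m : ℤ, f.toFun x = x + m}

/-- `q(f)`: the minimal period of the underlying circle homeomorphism. -/
noncomputable def q (f : HomeoZR) : ℕ :=
  sInf {n : ℕ | 0 < n ∧ ∃ x : ℝ, ∃ m : ℤ, f.toFun^[n] x = x + m}

/-- `p(f)`: the least `p ≥ 0` with `rot(f) = p / q(f)` mod `ℤ`. -/
noncomputable def p (f : HomeoZR) : ℕ :=
  sInf {p : ℕ | ∃ m : ℤ, f.transNum = (p : ℝ) / (f.q : ℝ) + (m : ℝ)}

/-- Natural powers. -/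
protected def npow (f : HomeoZR) : ℕ → HomeoZR
  | 0 => HomeoZR.id
  | n + 1 => (f.npow n).comp f

/-- Integer powers. -/
protected def zpow (f : HomeoZR) (k : ℤ) : HomeoZR :=
  if 0 ≤ k then f.npow k.toNat else f.symm.npow (-k).toNat

end HomeoZR

/-- `f` has rational rotation number. -/
def RatRot (f : HomeoZR) : Prop := ∃ r : ℚ, f.transNum = (r : ℝ)

/-- `F` is a positive one-parameter family (one-parameter group) commuting with `f`:
for `t ≠ 0` the fixed set of `F t` is the frontier of `Per f`, and for `t > 0` the
canonical lift of `F t` moves every point off the frontier strictly to the right. -/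
def PosFamily (f : HomeoZR) (F : ℝ → HomeoZR) : Prop :=
  (∀ s t, (F (s + t)).toFun = (F s).toFun ∘ (F t).toFun) ∧
  (∀ t, (F t).toFun ∘ f.toFun = f.toFun ∘ (F t).toFun) ∧
  (∀ t, t ≠ 0 → (F t).FixS = frontier f.Per) ∧
  (∀ t, 0 < t → ∀ x, x ∉ frontier f.Per → x < (F t).canon x)

/-- `δ_{f,g}(x,t)`, where `F` is a positive one-parameter family commuting with `f`. -/
noncomputable def delta (F : ℝ → HomeoZR) (g : HomeoZR) (x t : ℝ) : ℝ :=
  ((F t).canon ∘ g.canon)^[g.q] x - x - (g.p : ℝ)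

/-- Persistent periodic points. -/
def Pset (F : ℝ → HomeoZR) (g : HomeoZR) : Set ℝ := {x | ∀ t, delta F g x t = 0}

/-- Never-periodic points. -/
def Nset (F : ℝ → HomeoZR) (g : HomeoZR) : Set ℝ := {x | ∀ t, delta F g x t ≠ 0}

/-- Points periodic at a unique time. -/
def Uset (F : ℝ → HomeoZR) (g : HomeoZR) : Set ℝ := {x | ∃! t, delta F g x t = 0}

/-- `x` has a finite orbit in the circle under the group generated by `f` and `g`. -/
def FiniteOrbit (f g : HomeoZR) (x : ℝ) : Prop :=
  ∃ S : Set ℝ, S.Finite ∧ x ∈ S ∧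
    (∀ y ∈ S, ∃ z ∈ S, ∃ m : ℤ, f.toFun y = z + m) ∧
    (∀ y ∈ S, ∃ z ∈ S, ∃ m : ℤ, g.toFun y = z + m)

/-- `τ(f_1, …, f_n) = rot̃(f_n ∘ ⋯ ∘ f_1) − Σ rot̃(f_i)`. -/
noncomputable def tau (L : List HomeoZR) : ℝ :=
  (L.foldl (fun h u => u.comp h) HomeoZR.id).transNum
    - (L.map HomeoZR.transNum).sum

/-- The `ℤ`-saturated open interval over `(a,b)` (the lift of a circle arc). -/
def liftedIoo (a b : ℝ) : Set ℝ := ⋃ m : ℤ, Set.Ioo (a + m) (b + m)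

/-- The `ℤ`-saturated closed interval over `[a,b]` (the lift of a closed circle arc). -/
def liftedIcc (a b : ℝ) : Set ℝ := ⋃ m : ℤ, Set.Icc (a + m) (b + m)

/-- Witness data that `f` is `n`-savage: `2n` open arcs `I₁⁻, I₁⁺, …, Iₙ⁻, Iₙ⁺` in
cyclic order with pairwise disjoint closures (encoded by `4n` cyclically ordered
endpoints, all within one fundamental domain) such that
`f(S¹ ∖ ⋃ closure Iⱼ⁻) = ⋃ Iⱼ⁺`. -/
def SavageData (n : ℕ) (f : HomeoZR) (c : Fin (4 * n) → ℝ) : Prop :=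
  StrictMono c ∧ (∀ i j : Fin (4 * n), c i < c j + 1) ∧
  f.toFun '' (⋃ j : Fin n,
      liftedIcc (c ⟨4 * j.1, by have := j.2; omega⟩)
        (c ⟨4 * j.1 + 1, by have := j.2; omega⟩))ᶜ
    = ⋃ j : Fin n,
        liftedIoo (c ⟨4 * j.1 + 2, by have := j.2; omega⟩)
          (c ⟨4 * j.1 + 3, by have := j.2; omega⟩)

/-- `f` is `n`-savage. -/
def IsSavage (n : ℕ) (f : HomeoZR) : Prop := ∃ c, SavageData n f c


/-! Lift to `ℝ` and list the endpoints of all lifted arcs as one increasing sequence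
`d : ℤ → ℝ` with `d (k + 4n) = d k + 1`. The complement of the closed `I⁻` is the union of
the gaps `(d (4a+1), d (4a+4))`; since `f` is an increasing bijection of it onto the union of
the `I⁺`, each gap goes onto a single `I⁺`, and monotonicity forces one shift `t` for all gaps.
This description survives inversion (the `I⁻` and `I⁺` trade places) and composition with any
homeomorphism mapping each closed `I⁺` into an `I⁺`, which covers the powers of `f`. The closed
`I⁺` number `a` lies in gap `a`, so `fⁿ` maps it into the `I⁺` number `a + nt`, which is the same
arc moved by `t`: the intermediate value theorem gives `fⁿ x = x + t` there, whence `rot(fⁿ) = 0`;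
for the `I⁻` apply this to `f⁻¹`. -/

namespace HomeoZR

variable (f : HomeoZR)

theorem surjective : Surjective f.toFun :=
  f.right_inv.surjective

theorem continuous : Continuous f.toFun :=
  f.strictMono.monotone.continuous_of_surjective f.surjective

theorem toFun_add_int (x : ℝ) (m : ℤ) : f.toFun (x + m) = f.toFun x + m :=
  f.toLift.map_add_int x m

theorem image_Ioo (a b : ℝ) : f.toFun '' Ioo a b = Ioo (f.toFun a) (f.toFun b) := by
  simpa using (f.strictMono.orderIsoOfSurjective f.toFun f.surjective).image_Ioo a b

theorem npow_toFun (m : ℕ) : (f.npow m).toFun = f.toFun^[m] := by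
  induction m with
  | zero => rfl
  | succ m ih => exact congrArg (· ∘ f.toFun) ih

theorem transNum_eq_of_map_eq_add_int {x : ℝ} {m : ℤ} (h : f.toFun x = x + m) :
    f.transNum = m :=
  (f.toLift.translationNumber_eq_int_iff f.continuous).2 ⟨x, h⟩

theorem symm_Per_subset : f.symm.Per ⊆ f.Per := by
  rintro x ⟨k, hk, m, hx⟩
  refine ⟨k, hk, -m, ?_⟩
  have hinv : f.toFun^[k] (f.invFun^[k] x) = x := f.right_inv.iterate k x
  rw [show f.invFun^[k] x = x + m from hx, ← f.npow_toFun, toFun_add_int] at hinv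
  rw [← f.npow_toFun]
  push_cast
  linarith

end HomeoZR

theorem map_add_mul_int {u : ℤ → ℝ} {p : ℤ} (hu : ∀ k, u (k + p) = u k + 1) (k m : ℤ) :
    u (k + p * m) = u k + m := by
  simpa [mul_comm] using AddConstMapClass.map_add_zsmul (⟨u, hu⟩ : AddConstMap ℤ ℝ p 1) k m

theorem Int.eq_add_of_strictMono_of_surjective {β : ℤ → ℤ} (hmono : StrictMono β)
    (hsurj : Surjective β) (a : ℤ) : β a = a + β 0 := by
  have hsucc : ∀ a, β (a + 1) = β a + 1 := fun a => by
    simpa [Order.succ_eq_add_one] using (hmono.orderIsoOfSurjective β hsurj).map_succ a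
  induction a using Int.induction_on with
  | zero => simp
  | succ i ih => rw [hsucc, ih]; ring
  | pred i ih =>
    have := hsucc (-i - 1)
    rw [sub_add_cancel] at this
    linarith

theorem exists_le_and_lt_add_one {e : ℤ → ℝ} {p : ℤ} (he : StrictMono e)
    (hper : ∀ k, e (k + p) = e k + 1) (x : ℝ) : ∃ k, e k ≤ x ∧ x < e (k + 1) := by
  have hmul : ∀ m : ℤ, e (p * m) = e 0 + m := fun m => by simpa using map_add_mul_int hper 0 m
  obtain ⟨k, hk, hmax⟩ := Int.exists_greatest_of_bdd (P := fun k => e k ≤ x)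
    ⟨p * ⌈x - e 0⌉, fun k hk => le_of_not_gt fun hlt => by
      have := (he hlt).trans_le hk
      rw [hmul] at this
      linarith [Int.le_ceil (x - e 0)]⟩
    ⟨p * ⌊x - e 0⌋, by simp only [hmul]; linarith [Int.floor_le (x - e 0)]⟩
  exact ⟨k, hk, lt_of_not_ge fun h => by have := hmax _ h; omega⟩

theorem exists_strictMono_extension {N : ℕ} (hN : 0 < N) {c : Fin N → ℝ} (hc : StrictMono c)
    (hc1 : ∀ i j, c i < c j + 1) :
    ∃ d : ℤ → ℝ, StrictMono d ∧ (∀ k, d (k + N) = d k + 1) ∧ ∀ i : Fin N, d (i : ℕ) = c i := by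
  have hN' : (0 : ℤ) < N := by exact_mod_cast hN
  let d : ℤ → ℝ := fun k => c ⟨(k % N).toNat, by
    have := Int.emod_lt_of_pos k hN'; have := Int.emod_nonneg k hN'.ne'; omega⟩ + (k / N : ℤ)
  have hd : ∀ r q : ℤ, (h0 : 0 ≤ r) → (h1 : r < N) →
      d (r + N * q) = c ⟨r.toNat, by omega⟩ + q := fun r q h0 h1 => by
    obtain ⟨hq, hr⟩ := (Int.ediv_emod_unique (a := r + N * q) (q := q) hN').2 ⟨rfl, h0, h1⟩
    simp only [d, hq, hr]
  have hdecomp : ∀ k : ℤ, ∃ r q : ℤ, 0 ≤ r ∧ r < N ∧ k = r + N * q := fun k =>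
    ⟨k % N, k / N, Int.emod_nonneg k hN'.ne', Int.emod_lt_of_pos k hN',
      (Int.emod_add_mul_ediv k N).symm⟩
  refine ⟨d, strictMono_int_of_lt_succ fun k => ?_, fun k => ?_, fun i => ?_⟩
  · obtain ⟨r, q, h0, h1, rfl⟩ := hdecomp k
    rw [hd r q h0 h1]
    rcases (show r + 1 ≤ N by omega).lt_or_eq with hr | hr
    · rw [show r + N * q + 1 = r + 1 + N * q by ring, hd (r + 1) q (by omega) hr]
      have : c ⟨r.toNat, by omega⟩ < c ⟨(r + 1).toNat, by omega⟩ := hc (by rw [Fin.mk_lt_mk]; omega)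
      linarith
    · rw [show r + N * q + 1 = 0 + N * (q + 1) by rw [← hr]; ring, hd 0 (q + 1) le_rfl hN']
      have := hc1 ⟨r.toNat, by omega⟩ ⟨0, hN⟩
      push_cast
      linarith
  · obtain ⟨r, q, h0, h1, rfl⟩ := hdecomp k
    rw [show r + N * q + N = r + N * (q + 1) by ring, hd r (q + 1) h0 h1, hd r q h0 h1]
    push_cast
    ring
  · simpa using hd i 0 (by omega) (by omega)

theorem compl_iUnion_Icc {n : ℕ} {d : ℤ → ℝ} (hd : StrictMono d)
    (hper : ∀ k, d (k + 4 * n) = d k + 1) :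
    (⋃ a : ℤ, Icc (d (4 * a)) (d (4 * a + 1)))ᶜ = ⋃ a : ℤ, Ioo (d (4 * a + 1)) (d (4 * a + 4)) := by
  ext x
  simp only [mem_compl_iff, mem_iUnion, mem_Icc, mem_Ioo, not_exists, not_and, not_le]
  constructor
  · intro hx
    obtain ⟨a, ha, hxa⟩ := exists_le_and_lt_add_one (e := fun a => d (4 * a)) (p := n)
      (fun a b h => hd (by omega)) (fun a => by simpa [mul_add] using hper (4 * a)) x
    exact ⟨a, hx a ha, by simpa [mul_add] using hxa⟩
  · rintro ⟨a, h1, h4⟩ b hb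
    rcases le_or_gt b a with hba | hab
    · exact (hd.monotone (by omega : 4 * b + 1 ≤ 4 * a + 1)).trans_lt h1
    · exact absurd hb (not_le.2 (h4.trans_le (hd.monotone (by omega))))

theorem iUnion_fin_iUnion_int_add_mul {α : Type*} {n : ℕ} (hn : 0 < n) (S : ℤ → Set α) :
    ⋃ (j : Fin n) (m : ℤ), S (j + n * m) = ⋃ a, S a := by
  refine Subset.antisymm (iUnion₂_subset fun j m => subset_iUnion _ _) fun x hx => ?_
  obtain ⟨a, hx⟩ := mem_iUnion.1 hx
  have h0 : 0 ≤ a % n := Int.emod_nonneg a (by omega)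
  have hlt : a % n < n := Int.emod_lt_of_pos a (by omega)
  refine mem_iUnion₂.2 ⟨⟨(a % n).toNat, by omega⟩, a / n, ?_⟩
  rwa [Fin.val_mk, Int.toNat_of_nonneg h0, Int.emod_add_mul_ediv]

theorem iUnion_fin_iUnion_add_int {n : ℕ} (hn : 0 < n) (I : ℝ → ℝ → Set ℝ) {u v : ℤ → ℝ}
    (hu : ∀ a, u (a + n) = u a + 1) (hv : ∀ a, v (a + n) = v a + 1) :
    ⋃ (j : Fin n) (m : ℤ), I (u j + m) (v j + m) = ⋃ a, I (u a) (v a) := by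
  simp only [← map_add_mul_int hu, ← map_add_mul_int hv]
  exact iUnion_fin_iUnion_int_add_mul hn fun a => I (u a) (v a)

theorem image_compl_iUnion_lifted_iff {n : ℕ} (hn : 0 < n) {d : ℤ → ℝ}
    (hper : ∀ k, d (k + 4 * n) = d k + 1) (g : ℝ → ℝ) :
    g '' (⋃ j : Fin n, liftedIcc (d (4 * (j : ℕ))) (d (4 * (j : ℕ) + 1)))ᶜ
        = ⋃ j : Fin n, liftedIoo (d (4 * (j : ℕ) + 2)) (d (4 * (j : ℕ) + 3)) ↔
      g '' (⋃ a : ℤ, Icc (d (4 * a)) (d (4 * a + 1)))ᶜ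
        = ⋃ a : ℤ, Ioo (d (4 * a + 2)) (d (4 * a + 3)) := by
  have hu : ∀ i : ℤ, ∀ a, d (4 * (a + n) + i) = d (4 * a + i) + 1 := fun i a => by
    rw [← hper]; congr 1; ring
  simp only [liftedIcc, liftedIoo]
  rw [iUnion_fin_iUnion_add_int hn Icc (u := fun a => d (4 * a)) (v := fun a => d (4 * a + 1))
      (by simpa using hu 0) (hu 1), iUnion_fin_iUnion_add_int hn Ioo
      (u := fun a => d (4 * a + 2)) (v := fun a => d (4 * a + 3)) (hu 2) (hu 3)]

theorem Ioo_subset_liftedIoo (a b : ℝ) : Ioo a b ⊆ liftedIoo a b :=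
  fun x hx => mem_iUnion.2 ⟨0, by simpa using hx⟩

section IntervalFamily

variable {l r l' r' : ℤ → ℝ}

theorem left_notMem_iUnion_Ioo (hord : ∀ a b, a < b → r a ≤ l b) {b : ℤ} (hb : l b < r b) :
    l b ∉ ⋃ a, Ioo (l a) (r a) := by
  simp only [mem_iUnion, mem_Ioo, not_exists, not_and]
  intro a h1 h2
  rcases lt_trichotomy a b with h | rfl | h
  · linarith [hord _ _ h]
  · exact h1.false
  · linarith [hord _ _ h]

theorem right_notMem_iUnion_Ioo (hord : ∀ a b, a < b → r a ≤ l b) {b : ℤ} (hb : l b < r b) :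
    r b ∉ ⋃ a, Ioo (l a) (r a) := by
  simp only [mem_iUnion, mem_Ioo, not_exists, not_and]
  intro a h1 h2
  rcases lt_trichotomy a b with h | rfl | h
  · linarith [hord _ _ h]
  · exact h2.false
  · linarith [hord _ _ h]

theorem exists_le_and_le_of_Ioo_subset_iUnion (hord : ∀ a b, a < b → r a ≤ l b) {u v : ℝ}
    (huv : u < v) (h : Ioo u v ⊆ ⋃ b, Ioo (l b) (r b)) : ∃ b, l b ≤ u ∧ v ≤ r b := by
  obtain ⟨y, hy⟩ := nonempty_Ioo.2 huv
  obtain ⟨b, hb⟩ := mem_iUnion.1 (h hy)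
  refine ⟨b, le_of_not_gt fun hu => ?_, le_of_not_gt fun hv => ?_⟩
  · exact left_notMem_iUnion_Ioo hord (hb.1.trans hb.2) (h ⟨hu, hb.1.trans hy.2⟩)
  · exact right_notMem_iUnion_Ioo hord (hb.1.trans hb.2) (h ⟨hy.1.trans hb.2, hv⟩)

theorem exists_eq_of_iUnion_Ioo_eq (hlr : ∀ a, l a < r a) (hord : ∀ a b, a < b → r a ≤ l b)
    (hord' : ∀ a b, a < b → r' a ≤ l' b) (h : ⋃ a, Ioo (l a) (r a) = ⋃ b, Ioo (l' b) (r' b))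
    (a : ℤ) : ∃ b, l a = l' b ∧ r a = r' b := by
  obtain ⟨b, hb₁, hb₂⟩ := exists_le_and_le_of_Ioo_subset_iUnion hord' (hlr a)
    ((subset_iUnion (fun a => Ioo (l a) (r a)) a).trans h.le)
  obtain ⟨a', ha₁, ha₂⟩ := exists_le_and_le_of_Ioo_subset_iUnion hord
    (hb₁.trans_lt ((hlr a).trans_le hb₂))
    ((subset_iUnion (fun b => Ioo (l' b) (r' b)) b).trans h.ge)
  obtain rfl : a' = a := by
    rcases lt_trichotomy a' a with h' | h' | h'
    · linarith [hord _ _ h', hlr a]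
    · exact h'
    · linarith [hord _ _ h', hlr a]
  exact ⟨b, le_antisymm ha₁ hb₁, le_antisymm hb₂ ha₂⟩

end IntervalFamily

theorem exists_map_eq_add_of_mapsTo {g : ℝ → ℝ} (hg : Continuous g) {a b r : ℝ} (hab : a ≤ b)
    (h : MapsTo g (Icc a b) (Ioo (a + r) (b + r))) : ∃ x ∈ Ioo a b, g x = x + r := by
  have ha := h (left_mem_Icc.2 hab)
  have hb := h (right_mem_Icc.2 hab)
  obtain ⟨x, hx, hgx⟩ := intermediate_value_Ioo' hab (hg.sub continuous_id).continuousOn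
    (show r ∈ Ioo (g b - b) (g a - a) from ⟨by linarith [hb.2], by linarith [ha.1]⟩)
  exact ⟨x, hx, by simp only [Pi.sub_apply, id] at hgx; linarith⟩

/-- The lifted `I⁻` are `[d (4a), d (4a+1)]`, the lifted `I⁺` are `(d (4a+2), d (4a+3))`, and `f`
maps the gap `(d (4a+1), d (4a+4))` onto the `I⁺` with index `a + t`. -/
structure SavageEndpoints (n : ℕ) (f : HomeoZR) (d : ℤ → ℝ) (t : ℤ) : Prop where
  strictMono : StrictMono d
  add_four_mul : ∀ k, d (k + 4 * n) = d k + 1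
  map_left : ∀ a, f.toFun (d (4 * a + 1)) = d (4 * (a + t) + 2)
  map_right : ∀ a, f.toFun (d (4 * a + 4)) = d (4 * (a + t) + 3)

def compEndpoints (F : HomeoZR) (d : ℤ → ℝ) (s k : ℤ) : ℝ :=
  if k % 4 < 2 then d k else F.toFun (d (k - 4 * s))

theorem compEndpoints_of_lt {F : HomeoZR} {d : ℤ → ℝ} {s k : ℤ} (h : k % 4 < 2) :
    compEndpoints F d s k = d k :=
  if_pos h

theorem compEndpoints_of_le {F : HomeoZR} {d : ℤ → ℝ} {s k : ℤ} (h : 2 ≤ k % 4) :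
    compEndpoints F d s k = F.toFun (d (k - 4 * s)) :=
  if_neg (by omega)

namespace SavageEndpoints

variable {n : ℕ} {f : HomeoZR} {d : ℤ → ℝ} {t : ℤ}

theorem pos (hd : SavageEndpoints n f d t) : 0 < n := by
  by_contra! h
  have := hd.add_four_mul 0
  simp_all

theorem exists_of_image_compl (hd : StrictMono d) (hper : ∀ k, d (k + 4 * n) = d k + 1)
    (himg : f.toFun '' (⋃ a : ℤ, Icc (d (4 * a)) (d (4 * a + 1)))ᶜ
      = ⋃ a : ℤ, Ioo (d (4 * a + 2)) (d (4 * a + 3))) :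
    ∃ t, SavageEndpoints n f d t := by
  rw [compl_iUnion_Icc hd hper, image_iUnion] at himg
  simp only [f.image_Ioo] at himg
  have hlr : ∀ a, f.toFun (d (4 * a + 1)) < f.toFun (d (4 * a + 4)) :=
    fun a => f.strictMono (hd (by omega))
  have hlr' : ∀ b, d (4 * b + 2) < d (4 * b + 3) := fun b => hd (by omega)
  have hord : ∀ a b : ℤ, a < b → f.toFun (d (4 * a + 4)) ≤ f.toFun (d (4 * b + 1)) :=
    fun a b h => f.strictMono.monotone (hd.monotone (by omega))
  have hord' : ∀ a b : ℤ, a < b → d (4 * a + 3) ≤ d (4 * b + 2) :=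
    fun a b h => hd.monotone (by omega)
  choose β hβ using exists_eq_of_iUnion_Ioo_eq hlr hord hord' himg
  have hβmono : StrictMono β := fun a a' h => by
    have : d (4 * β a + 2) < d (4 * β a' + 2) := by
      rw [← (hβ a).1, ← (hβ a').1]
      exact f.strictMono (hd (by omega))
    have := hd.lt_iff_lt.1 this
    omega
  have hβsurj : Surjective β := fun b => by
    obtain ⟨a, ha, -⟩ := exists_eq_of_iUnion_Ioo_eq hlr' hord' hord himg.symm b
    have := hd.injective (ha.trans (hβ a).1)
    exact ⟨a, by omega⟩
  have hβ_eq := Int.eq_add_of_strictMono_of_surjective hβmono hβsurj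
  exact ⟨β 0, hd, hper, fun a => by rw [(hβ a).1, hβ_eq a], fun a => by rw [(hβ a).2, hβ_eq a]⟩

theorem add_four_mul_mul (hd : SavageEndpoints n f d t) (k m : ℤ) : d (k + 4 * n * m) = d k + m :=
  map_add_mul_int hd.add_four_mul k m

theorem image_gap (hd : SavageEndpoints n f d t) (a : ℤ) :
    f.toFun '' Ioo (d (4 * a + 1)) (d (4 * a + 4))
      = Ioo (d (4 * (a + t) + 2)) (d (4 * (a + t) + 3)) := by
  rw [f.image_Ioo, hd.map_left, hd.map_right]

theorem image_compl (hd : SavageEndpoints n f d t) :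
    f.toFun '' (⋃ a : ℤ, Icc (d (4 * a)) (d (4 * a + 1)))ᶜ
      = ⋃ a : ℤ, Ioo (d (4 * a + 2)) (d (4 * a + 3)) := by
  rw [compl_iUnion_Icc hd.strictMono hd.add_four_mul, image_iUnion]
  simp only [hd.image_gap]
  exact (add_right_surjective t).iUnion_comp fun a => Ioo (d (4 * a + 2)) (d (4 * a + 3))

theorem toSavageData (hd : SavageEndpoints n f d t) : SavageData n f fun i => d (i : ℕ) := by
  have hn := hd.pos
  refine ⟨hd.strictMono.comp (Nat.strictMono_cast.comp Fin.val_strictMono), fun i j => ?_, ?_⟩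
  · calc d (i : ℕ) < d ((j : ℕ) + 4 * n) := hd.strictMono (by omega)
      _ = d (j : ℕ) + 1 := hd.add_four_mul _
  · dsimp only
    push_cast
    exact (image_compl_iUnion_lifted_iff hn hd.add_four_mul f.toFun).2 hd.image_compl

theorem symm (hd : SavageEndpoints n f d t) :
    SavageEndpoints n f.symm (fun k => d (k + 2)) (-t) where
  strictMono := hd.strictMono.comp fun a b h => by simpa using h
  add_four_mul k := by simp only [add_right_comm k, hd.add_four_mul]
  map_left a := by
    show f.invFun (d (4 * a + 1 + 2)) = d (4 * (a + -t) + 2 + 2)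
    rw [show 4 * a + 1 + 2 = 4 * (a + -t + t) + 3 by ring, ← hd.map_right, f.left_inv _]
    congr 1
    ring
  map_right a := by
    show f.invFun (d (4 * a + 4 + 2)) = d (4 * (a + -t) + 3 + 2)
    rw [show 4 * a + 4 + 2 = 4 * (a + 1 + -t + t) + 2 by ring, ← hd.map_left, f.left_inv _]
    congr 1
    ring

theorem mapsTo_Icc_Ioo (hd : SavageEndpoints n f d t) (b : ℤ) :
    MapsTo f.toFun (Icc (d (4 * b + 2)) (d (4 * b + 3)))
      (Ioo (d (4 * (b + t) + 2)) (d (4 * (b + t) + 3))) := by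
  rw [← hd.image_gap]
  exact (mapsTo_image _ _).mono_left
    (Icc_subset_Ioo (hd.strictMono (by omega)) (hd.strictMono (by omega)))

theorem mapsTo_npow_succ (hd : SavageEndpoints n f d t) (m : ℕ) (b : ℤ) :
    MapsTo (f.npow (m + 1)).toFun (Icc (d (4 * b + 2)) (d (4 * b + 3)))
      (Ioo (d (4 * (b + (m + 1) * t) + 2)) (d (4 * (b + (m + 1) * t) + 3))) := by
  induction m generalizing b with
  | zero =>
    simp only [CharP.cast_eq_zero, zero_add, one_mul]
    exact hd.mapsTo_Icc_Ioo b
  | succ m ih =>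
    have := (ih (b + t)).comp ((hd.mapsTo_Icc_Ioo b).mono_right Ioo_subset_Icc_self)
    rwa [show b + t + (m + 1) * t = b + ((m + 1 : ℕ) + 1) * t by push_cast; ring] at this

theorem mapsTo_npow (hd : SavageEndpoints n f d t) (m : ℕ) (b : ℤ) :
    MapsTo (f.npow m).toFun (Icc (d (4 * b + 2)) (d (4 * b + 3)))
      (Icc (d (4 * (b + m * t) + 2)) (d (4 * (b + m * t) + 3))) := by
  cases m with
  | zero =>
    simp only [CharP.cast_eq_zero, zero_mul, add_zero]
    exact mapsTo_id _
  | succ m => simpa using (hd.mapsTo_npow_succ m b).mono_right Ioo_subset_Icc_self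

theorem comp (hd : SavageEndpoints n f d t) (F : HomeoZR) (s : ℤ)
    (hF : ∀ b, MapsTo F.toFun (Icc (d (4 * b + 2)) (d (4 * b + 3)))
      (Icc (d (4 * (b + s) + 2)) (d (4 * (b + s) + 3)))) :
    SavageEndpoints n (F.comp f) (compEndpoints F d s) (t + s) where
  strictMono := by
    refine strictMono_int_of_lt_succ fun k => ?_
    obtain ⟨a, rfl | rfl | rfl | rfl⟩ :
        ∃ a, k = 4 * a ∨ k = 4 * a + 1 ∨ k = 4 * a + 2 ∨ k = 4 * a + 3 := ⟨k / 4, by omega⟩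
    · rw [compEndpoints_of_lt (by omega), compEndpoints_of_lt (by omega)]
      exact hd.strictMono (by omega)
    · rw [compEndpoints_of_lt (by omega), compEndpoints_of_le (by omega),
        show 4 * a + 1 + 1 - 4 * s = 4 * (a - s) + 2 by ring]
      exact (hd.strictMono (by omega)).trans_le
        (hF (a - s) (left_mem_Icc.2 (hd.strictMono (by omega)).le)).1
    · rw [compEndpoints_of_le (by omega), compEndpoints_of_le (by omega)]
      exact F.strictMono (hd.strictMono (by omega))
    · rw [compEndpoints_of_le (by omega), compEndpoints_of_lt (by omega),
        show 4 * a + 3 - 4 * s = 4 * (a - s) + 3 by ring]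
      exact (hF (a - s) (right_mem_Icc.2 (hd.strictMono (by omega)).le)).2.trans_lt
        (hd.strictMono (by omega))
  add_four_mul k := by
    by_cases hk : k % 4 < 2
    · rw [compEndpoints_of_lt hk, compEndpoints_of_lt (by omega), hd.add_four_mul]
    · rw [compEndpoints_of_le (by omega), compEndpoints_of_le (by omega), add_sub_right_comm,
        hd.add_four_mul, F.map_add_one]
  map_left a := by
    show F.toFun (f.toFun (compEndpoints F d s (4 * a + 1))) = _
    rw [compEndpoints_of_lt (by omega), hd.map_left, compEndpoints_of_le (by omega)]
    congr 2
    ring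
  map_right a := by
    show F.toFun (f.toFun (compEndpoints F d s (4 * a + 4))) = _
    rw [compEndpoints_of_lt (by omega), hd.map_right, compEndpoints_of_le (by omega)]
    congr 2
    ring

theorem isSavage_npow (hd : SavageEndpoints n f d t) {m : ℕ} (hm : m ≠ 0) :
    IsSavage n (f.npow m) := by
  obtain ⟨m, rfl⟩ := Nat.exists_eq_succ_of_ne_zero hm
  exact ⟨_, (hd.comp (f.npow m) (m * t) (hd.mapsTo_npow m)).toSavageData⟩

theorem exists_npow_eq_add (hd : SavageEndpoints n f d t) (b : ℤ) :
    ∃ x ∈ Ioo (d (4 * b + 2)) (d (4 * b + 3)), (f.npow n).toFun x = x + t := by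
  obtain ⟨m, rfl⟩ : ∃ m, n = m + 1 := ⟨n - 1, by have := hd.pos; omega⟩
  have hshift : ∀ i, d (4 * (b + (m + 1) * t) + i) = d (4 * b + i) + t := fun i => by
    rw [← hd.add_four_mul_mul]
    congr 1
    push_cast
    ring
  have h := hd.mapsTo_npow_succ m b
  rw [hshift, hshift] at h
  exact exists_map_eq_add_of_mapsTo (f.npow _).continuous (hd.strictMono (by omega)).le h

theorem exists_mem_Per_Ioo (hd : SavageEndpoints n f d t) (b : ℤ) :
    ∃ x ∈ f.Per, x ∈ Ioo (d (4 * b + 2)) (d (4 * b + 3)) := by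
  obtain ⟨x, hx, hfx⟩ := hd.exists_npow_eq_add b
  exact ⟨x, ⟨n, hd.pos, t, by rwa [← f.npow_toFun]⟩, hx⟩

theorem exists_mem_Per_Ioo_minus (hd : SavageEndpoints n f d t) (a : ℤ) :
    ∃ x ∈ f.Per, x ∈ Ioo (d (4 * a)) (d (4 * a + 1)) := by
  obtain ⟨x, hx, hxI⟩ := hd.symm.exists_mem_Per_Ioo (a - 1)
  refine ⟨x, f.symm_Per_subset hx, ?_⟩
  simpa only [show 4 * (a - 1) + 2 + 2 = 4 * a by ring,
    show 4 * (a - 1) + 3 + 2 = 4 * a + 1 by ring] using hxI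

theorem transNum_npow (hd : SavageEndpoints n f d t) : (f.npow n).transNum = t := by
  obtain ⟨x, -, hfx⟩ := hd.exists_npow_eq_add 0
  exact (f.npow n).transNum_eq_of_map_eq_add_int hfx

end SavageEndpoints

namespace SavageData

variable {n : ℕ} {f : HomeoZR} {c : Fin (4 * n) → ℝ}

theorem pos (hc : SavageData n f c) : 0 < n := by
  obtain ⟨-, -, himg⟩ := hc
  by_contra! h
  obtain rfl : n = 0 := by omega
  simp [f.surjective.range_eq] at himg

theorem exists_savageEndpoints (hc : SavageData n f c) :
    ∃ d t, SavageEndpoints n f d t ∧ ∀ (i : ℕ) (hi : i < 4 * n), c ⟨i, hi⟩ = d i := by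
  have hn := hc.pos
  obtain ⟨hmono, hc1, himg⟩ := hc
  obtain ⟨d, hd, hper, hdc⟩ := exists_strictMono_extension (by omega : 0 < 4 * n) hmono hc1
  have hper' : ∀ k, d (k + 4 * n) = d k + 1 := by simpa using hper
  have hcd : ∀ (i : ℕ) (hi : i < 4 * n), c ⟨i, hi⟩ = d i := fun i hi => (hdc ⟨i, hi⟩).symm
  simp only [hcd] at himg
  push_cast at himg
  rw [image_compl_iUnion_lifted_iff hn hper'] at himg
  obtain ⟨t, ht⟩ := SavageEndpoints.exists_of_image_compl hd hper' himg
  exact ⟨d, t, ht, hcd⟩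

end SavageData

/-- Observation 3.5. If `f` is `n`-savage then so is `f^k` for every
nonzero integer `k`; moreover `rot(fⁿ) = 0` and `f` has a periodic point in each of the
intervals `Iⱼ⁻` and `Iⱼ⁺`. -/
theorem savage_properties (n : ℕ) (f : HomeoZR)
    (c : Fin (4 * n) → ℝ) (hc : SavageData n f c) :
    (∀ k : ℤ, k ≠ 0 → IsSavage n (f.zpow k)) ∧
    (∃ m : ℤ, (f.npow n).transNum = (m : ℝ)) ∧
    (∀ j : Fin n,
      (∃ x ∈ f.Per,
        x ∈ liftedIoo (c ⟨4 * j.1, by have := j.2; omega⟩)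
          (c ⟨4 * j.1 + 1, by have := j.2; omega⟩)) ∧
      (∃ x ∈ f.Per,
        x ∈ liftedIoo (c ⟨4 * j.1 + 2, by have := j.2; omega⟩)
          (c ⟨4 * j.1 + 3, by have := j.2; omega⟩))) := by
  obtain ⟨d, t, hd, hcd⟩ := hc.exists_savageEndpoints
  refine ⟨fun k hk => ?_, ⟨t, hd.transNum_npow⟩, fun j => ?_⟩
  · rw [HomeoZR.zpow]
    split_ifs
    · exact hd.isSavage_npow (by omega)
    · exact hd.symm.isSavage_npow (by omega)
  · simp only [hcd]
    push_cast
    obtain ⟨x, hx, hxI⟩ := hd.exists_mem_Per_Ioo_minus j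
    obtain ⟨y, hy, hyI⟩ := hd.exists_mem_Per_Ioo j
    exact ⟨⟨x, hx, Ioo_subset_liftedIoo _ _ hxI⟩, ⟨y, hy, Ioo_subset_liftedIoo _ _ hyI⟩⟩
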